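/- arXiv:1304.1606 — 2 statements merged into one kernel-verified Lean document; each statement's English description precedes it below -/
import Mathlib

section
/- For all real x with -1 < x ≤ 1, the Legendre function of degree -1/2 satisfies P_{-1/2}(x) = (2/π) K(√((1-x)/2)), where K(k) = ∫_0^{π/2} (1 - k² sin²θ)^{-1/2} dθ is the complete elliptic integral of the first kind and P_ν(1-2z) = ₂F₁(-ν, ν+1; 1; z). -/
open Real MeasureTheory intervalIntegral Complex

/-- Complete elliptic integral of the first kind. -/
noncomputable def ellipticK (k : ℝ) : ℝ :=
  ∫ θ in (0:ℝ)..(π/2), (1 - k ^ 2 * Real.sin θ ^ 2) ^ (-(1/2 : ℝ))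

/-- Complete elliptic integral of the second kind. -/
noncomputable def ellipticE (k : ℝ) : ℝ :=
  ∫ θ in (0:ℝ)..(π/2), (1 - k ^ 2 * Real.sin θ ^ 2) ^ ((1/2 : ℝ))

/-- Legendre function of the first kind of degree ν : P_ν(1-2z) = ₂F₁(-ν, ν+1; 1; z). -/
noncomputable def legendreP (ν : ℂ) (x : ℂ) : ℂ :=
  ordinaryHypergeometric (-ν) (ν + 1) 1 ((1 - x) / 2)

/-! Expanding `(1 - k² sin² θ)^(-1/2)` in the binomial series `∑ cₙ tⁿ`, `cₙ = (1/2)ₙ / n!`,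
and integrating termwise (the series at `sin θ = 1` dominates) gives, by Wallis' formula
`∫₀^{π/2} sin^{2n} θ dθ = (π/2) cₙ`, the expansion
`K(k) = (π/2) ∑ cₙ² k^{2n} = (π/2) ₂F₁(1/2, 1/2; 1; k²)`.
Since `P_{-1/2}(x) = ₂F₁(1/2, 1/2; 1; (1 - x)/2)`, it remains to take `k² = (1 - x)/2`. -/

open scoped Nat

noncomputable def invSqrtCoeff (n : ℕ) : ℝ := (ascPochhammer ℝ n).eval (1 / 2) / n !

lemma invSqrtCoeff_pos (n : ℕ) : 0 < invSqrtCoeff n :=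
  div_pos (ascPochhammer_pos n _ (by norm_num)) (by positivity)

lemma invSqrtCoeff_succ (n : ℕ) :
    invSqrtCoeff (n + 1) = (2 * n + 1) / (2 * n + 2) * invSqrtCoeff n := by
  simp only [invSqrtCoeff, ascPochhammer_succ_eval, Nat.factorial_succ]
  push_cast
  field_simp
  ring

lemma invSqrtCoeff_eq_choose (n : ℕ) :
    invSqrtCoeff n = Ring.choose ((1 / 2 : ℝ) + n - 1) n := by
  rw [Ring.choose_eq_smul, Polynomial.descPochhammer_smeval_eq_ascPochhammer,
    Polynomial.ascPochhammer_smeval_eq_eval, invSqrtCoeff, smul_eq_mul, div_eq_inv_mul]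
  congr 2
  ring

lemma hasSum_invSqrtCoeff_mul_pow {t : ℝ} (ht : |t| < 1) :
    HasSum (fun n ↦ invSqrtCoeff n * t ^ n) ((1 - t) ^ (-(1 / 2 : ℝ))) := by
  have := (Real.one_div_one_sub_rpow_hasFPowerSeriesOnBall_zero (1 / 2)).hasSum
    (y := t) (by simpa [enorm_eq_nnnorm, ← NNReal.coe_lt_coe] using ht)
  simp only [FormalMultilinearSeries.ofScalars_apply_eq, zero_add, smul_eq_mul] at this
  rw [Real.rpow_neg (by linarith [le_abs_self t]), ← one_div]
  simpa only [invSqrtCoeff_eq_choose] using this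

lemma integral_sin_pow_two_mul (n : ℕ) :
    ∫ θ in (0 : ℝ)..(π / 2), Real.sin θ ^ (2 * n) = π / 2 * invSqrtCoeff n := by
  induction n with
  | zero => simp [invSqrtCoeff]
  | succ n ih =>
    rw [mul_add_one, integral_sin_pow, ih, invSqrtCoeff_succ]
    simp only [Real.sin_zero, Real.cos_pi_div_two]
    push_cast
    field_simp
    ring

lemma abs_sq_mul_sin_sq_lt_one {k : ℝ} (hk : |k| < 1) (θ : ℝ) :
    |k ^ 2 * Real.sin θ ^ 2| < 1 := by
  have hk2 : k ^ 2 < 1 := by simpa [sq_abs] using pow_lt_one₀ (abs_nonneg k) hk two_ne_zero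
  rw [abs_of_nonneg (by positivity)]
  exact (mul_le_of_le_one_right (sq_nonneg k) (Real.sin_sq_le_one θ)).trans_lt hk2

lemma integral_invSqrtCoeff_mul_sq_mul_sin_sq_pow (k : ℝ) (n : ℕ) :
    ∫ θ in (0 : ℝ)..(π / 2), invSqrtCoeff n * (k ^ 2 * Real.sin θ ^ 2) ^ n
      = π / 2 * (invSqrtCoeff n ^ 2 * (k ^ 2) ^ n) := by
  simp_rw [mul_pow, ← pow_mul, ← mul_assoc]
  rw [intervalIntegral.integral_const_mul, integral_sin_pow_two_mul]
  ring

lemma hasSum_ellipticK {k : ℝ} (hk : |k| < 1) :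
    HasSum (fun n ↦ π / 2 * (invSqrtCoeff n ^ 2 * (k ^ 2) ^ n)) (ellipticK k) := by
  have hk2 : |k ^ 2| < 1 := by simpa using abs_sq_mul_sin_sq_lt_one hk (π / 2)
  have hbound (n : ℕ) (θ : ℝ) :
      ‖invSqrtCoeff n * (k ^ 2 * Real.sin θ ^ 2) ^ n‖ ≤ invSqrtCoeff n * (k ^ 2) ^ n := by
    rw [norm_mul, Real.norm_of_nonneg (invSqrtCoeff_pos n).le, norm_pow,
      Real.norm_of_nonneg (by positivity)]
    exact mul_le_mul_of_nonneg_left (pow_le_pow_left₀ (by positivity)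
      (mul_le_of_le_one_right (sq_nonneg k) (Real.sin_sq_le_one θ)) n) (invSqrtCoeff_pos n).le
  have := intervalIntegral.hasSum_integral_of_dominated_convergence
    (fun n _ ↦ invSqrtCoeff n * (k ^ 2) ^ n)
    (fun n ↦ (by fun_prop : Continuous _).aestronglyMeasurable)
    (fun n ↦ ae_of_all _ fun θ _ ↦ hbound n θ)
    (ae_of_all _ fun _ _ ↦ (hasSum_invSqrtCoeff_mul_pow hk2).summable)
    intervalIntegrable_const
    (ae_of_all volume fun θ (_ : θ ∈ Set.uIoc 0 (π / 2)) ↦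
      hasSum_invSqrtCoeff_mul_pow (abs_sq_mul_sin_sq_lt_one hk θ))
  simp only [integral_invSqrtCoeff_mul_sq_mul_sin_sq_pow] at this
  exact this

lemma ordinaryHypergeometricCoefficient_half_half_one (n : ℕ) :
    ordinaryHypergeometricCoefficient (1 / 2 : ℂ) (1 / 2) 1 n = (invSqrtCoeff n ^ 2 : ℝ) := by
  have hhalf : (ascPochhammer ℂ n).eval (1 / 2) = ((ascPochhammer ℝ n).eval (1 / 2) : ℝ) := by
    rw [show (1 / 2 : ℂ) = algebraMap ℝ ℂ (1 / 2) by norm_num,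
      ← ascPochhammer_map (algebraMap ℝ ℂ), Polynomial.eval_map_algebraMap,
      Polynomial.aeval_algebraMap_apply_eq_algebraMap_eval]
    rfl
  have hfac : (n ! : ℂ) ≠ 0 := Nat.cast_ne_zero.2 n.factorial_ne_zero
  rw [ordinaryHypergeometricCoefficient, hhalf, ← Nat.cast_factorial, invSqrtCoeff]
  push_cast
  field_simp

lemma legendreP_neg_half_ofReal (x : ℝ) :
    legendreP (-1 / 2) x = ∑' n, ((invSqrtCoeff n ^ 2 * ((1 - x) / 2) ^ n : ℝ) : ℂ) := by
  rw [legendreP, ordinaryHypergeometric, ordinaryHypergeometric_sum_eq]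
  norm_num only [ordinaryHypergeometricCoefficient_half_half_one]
  push_cast [smul_eq_mul]
  rfl

theorem stmt0 (x : ℝ) (h1 : -1 < x) (h2 : x ≤ 1) :
    legendreP (-1/2) (x : ℂ) = ((2 / π) * ellipticK (Real.sqrt ((1 - x) / 2)) : ℝ) := by
  have hz : 0 ≤ (1 - x) / 2 := by linarith
  have hk : |Real.sqrt ((1 - x) / 2)| < 1 := by
    rw [abs_of_nonneg (Real.sqrt_nonneg _), Real.sqrt_lt' one_pos]
    linarith
  have hK := (hasSum_ellipticK hk).mul_left (2 / π)
  rw [Real.sq_sqrt hz] at hK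
  rw [legendreP_neg_half_ofReal, ← Complex.ofReal_tsum, ← hK.tsum_eq]
  congr 1
  refine tsum_congr fun n ↦ ?_
  field_simp
end

section
/- For complex ν: d/dx [ (1-x²)^{ν+1} P_ν(x) P_ν(-x) ] = (ν+1)(1-x²)^ν [P_ν(x) P_{ν+1}(-x) - P_ν(-x) P_{ν+1}(x)] for -1 < x < 1. -/
open Real MeasureTheory intervalIntegral Complex

/-!
With `F = ₂F₁(-ν, ν+1; 1; ·)` and `G = ₂F₁(-ν-1, ν+2; 1; ·)`, comparing Taylor coefficients gives
the contiguous relation `-2z(1-z) F'(z) = (ν+1) ((1-2z) F(z) - G(z))` for `‖z‖ < 1`. At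
`z = (1-x)/2` it is the Legendre recurrence `(1-x²) P_ν'(x) = (ν+1) (x P_ν(x) - P_{ν+1}(x))`.
Substituting it at `x` and `-x` into the product rule, the terms `x P_ν(x) P_ν(-x)` cancel
against the derivative of `(1-x²)^(ν+1)`.
-/

open Nat Polynomial FormalMultilinearSeries

section PowerSeries

variable {𝕜 : Type*} [NontriviallyNormedField 𝕜] {f : 𝕜 → 𝕜} {c : ℕ → 𝕜}
  {r : ENNReal} {z : 𝕜}

theorem HasFPowerSeriesOnBall.hasSum_ofScalars (hf : HasFPowerSeriesOnBall f (ofScalars 𝕜 c) 0 r)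
    (hz : z ∈ Metric.eball (0 : 𝕜) r) : HasSum (fun n ↦ c n * z ^ n) (f z) := by
  simpa [ofScalars_apply_eq, mul_comm] using hf.hasSum hz

theorem HasFPowerSeriesOnBall.deriv_ofScalars [CompleteSpace 𝕜]
    (hf : HasFPowerSeriesOnBall f (ofScalars 𝕜 c) 0 r) :
    HasFPowerSeriesOnBall (deriv f) (ofScalars 𝕜 fun n ↦ (n + 1) * c (n + 1)) 0 r := by
  convert (ContinuousLinearMap.apply 𝕜 𝕜 (1 : 𝕜)).comp_hasFPowerSeriesOnBall hf.fderiv using 1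
  · rfl
  ext n : 1
  rw [← mkPiRing_coeff_eq (ofScalars 𝕜 _),
    ← mkPiRing_coeff_eq (ContinuousLinearMap.compFormalMultilinearSeries _ _)]
  change _ = ContinuousMultilinearMap.mkPiRing 𝕜 (Fin n) ((ofScalars 𝕜 c).derivSeries.coeff n 1)
  simp [coeff_ofScalars]

theorem HasFPowerSeriesOnBall.hasSum_ofScalars_mul_deriv [CompleteSpace 𝕜]
    (hf : HasFPowerSeriesOnBall f (ofScalars 𝕜 c) 0 r) (hz : z ∈ Metric.eball (0 : 𝕜) r) :
    HasSum (fun n ↦ n * c n * z ^ n) (z * deriv f z) := by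
  refine (hasSum_nat_add_iff' 1).mp ?_
  simp only [Finset.sum_range_one, Nat.cast_zero, zero_mul, sub_zero]
  refine ((hf.deriv_ofScalars.hasSum_ofScalars hz).mul_left z).congr_fun fun n ↦ ?_
  push_cast
  ring

end PowerSeries

theorem ascPochhammer_succ_eval_left {S : Type*} [CommSemiring S] (n : ℕ) (k : S) :
    (ascPochhammer S (n + 1)).eval k = k * (ascPochhammer S n).eval (k + 1) := by
  rw [ascPochhammer_succ_left, eval_mul, eval_X, eval_comp, eval_add, eval_X, eval_one]

section Hypergeometric

theorem one_le_radius_ordinaryHypergeometricSeries {𝕂 : Type*} (𝔸 : Type*) [RCLike 𝕂]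
    [NormedDivisionRing 𝔸] [NormedAlgebra 𝕂 𝔸] (a b c : 𝕂) :
    1 ≤ (ordinaryHypergeometricSeries 𝔸 a b c).radius := by
  by_cases h : ∀ k : ℕ, (k : 𝕂) ≠ -a ∧ (k : 𝕂) ≠ -b ∧ (k : 𝕂) ≠ -c
  · exact (ordinaryHypergeometricSeries_radius_eq_one 𝔸 a b c h).ge
  push Not at h
  obtain ⟨k, hk⟩ := h
  by_cases ha : (k : 𝕂) = -a
  · rw [neg_eq_iff_eq_neg.mp ha.symm, ordinaryHypergeometric_radius_top_of_neg_nat₁]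
    exact le_top
  by_cases hb : (k : 𝕂) = -b
  · rw [neg_eq_iff_eq_neg.mp hb.symm, ordinaryHypergeometric_radius_top_of_neg_nat₂]
    exact le_top
  rw [neg_eq_iff_eq_neg.mp (hk ha hb).symm, ordinaryHypergeometric_radius_top_of_neg_nat₃]
  exact le_top

theorem hasFPowerSeriesOnBall_ordinaryHypergeometric (a b c : ℂ) :
    HasFPowerSeriesOnBall (₂F₁ a b c) (ordinaryHypergeometricSeries ℂ a b c) 0 1 :=
  ((ordinaryHypergeometricSeries ℂ a b c).hasFPowerSeriesOnBall
    (one_pos.trans_le (one_le_radius_ordinaryHypergeometricSeries ℂ a b c))).mono one_pos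
    (one_le_radius_ordinaryHypergeometricSeries ℂ a b c)

theorem analyticAt_ordinaryHypergeometric (a b c : ℂ) {z : ℂ} (hz : ‖z‖ < 1) :
    AnalyticAt ℂ (₂F₁ a b c) z :=
  (hasFPowerSeriesOnBall_ordinaryHypergeometric a b c).analyticAt_of_mem
    (mem_eball_zero_iff.2 (by simpa [enorm_eq_nnnorm, ← NNReal.coe_lt_coe] using hz))

variable {𝕂 : Type*} [Field 𝕂]

theorem ordinaryHypergeometricCoefficient_succ (a b c : 𝕂) (n : ℕ) :
    ordinaryHypergeometricCoefficient a b c (n + 1) =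
      ordinaryHypergeometricCoefficient a b c n * ((a + n) * (b + n)) / ((n + 1) * (c + n)) := by
  simp only [ordinaryHypergeometricCoefficient, ascPochhammer_succ_eval, factorial_succ, cast_mul,
    cast_succ, mul_inv, div_eq_mul_inv]
  ring

theorem mul_ordinaryHypergeometricCoefficient_sub_one_add_one_succ (a b c : 𝕂) (n : ℕ) :
    b * ordinaryHypergeometricCoefficient (a - 1) (b + 1) c (n + 1) =
      ordinaryHypergeometricCoefficient a b c n * ((a - 1) * (b + n) * (b + n + 1)) /
        ((n + 1) * (c + n)) := by
  have hb : b * (ascPochhammer 𝕂 (n + 1)).eval (b + 1) =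
      (ascPochhammer 𝕂 n).eval b * (b + n) * (b + n + 1) := by
    rw [← ascPochhammer_succ_eval_left, ascPochhammer_succ_eval, ascPochhammer_succ_eval]
    push_cast
    ring
  have ha : (ascPochhammer 𝕂 (n + 1)).eval (a - 1) = (a - 1) * (ascPochhammer 𝕂 n).eval a := by
    rw [ascPochhammer_succ_eval_left, sub_add_cancel]
  simp only [ordinaryHypergeometricCoefficient, ascPochhammer_succ_eval n c, factorial_succ,
    cast_mul, cast_succ, mul_inv, div_eq_mul_inv, ha]
  linear_combination ((n + 1 : 𝕂)⁻¹ * (n ! : 𝕂)⁻¹ * ((a - 1) * (ascPochhammer 𝕂 n).eval a) *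
    ((ascPochhammer 𝕂 n).eval c)⁻¹ * (c + n)⁻¹) * hb

theorem ordinaryHypergeometricCoefficient_legendre_succ [CharZero 𝕂] (ν : 𝕂) (n : ℕ) :
    (ν + 1) * (ordinaryHypergeometricCoefficient (-(ν + 1)) (ν + 1 + 1) 1 (n + 1) -
        ordinaryHypergeometricCoefficient (-ν) (ν + 1) 1 (n + 1)) -
      2 * (n + 1) * ordinaryHypergeometricCoefficient (-ν) (ν + 1) 1 (n + 1) =
    -2 * (n + ν + 1) * ordinaryHypergeometricCoefficient (-ν) (ν + 1) 1 n := by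
  have hB := mul_ordinaryHypergeometricCoefficient_sub_one_add_one_succ (-ν) (ν + 1) 1 n
  rw [show -ν - 1 = -(ν + 1) by ring] at hB
  have hn : (1 + n : 𝕂) ≠ 0 := by norm_cast; lia
  rw [mul_sub, hB, ordinaryHypergeometricCoefficient_succ, add_comm (n : 𝕂) 1]
  generalize ordinaryHypergeometricCoefficient (-ν) (ν + 1) 1 n = a
  field_simp
  ring

end Hypergeometric

theorem ordinaryHypergeometric_legendre_contiguous (ν : ℂ) {z : ℂ} (hz : ‖z‖ < 1) :
    -2 * z * (1 - z) * deriv (₂F₁ (-ν) (ν + 1) 1) z =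
      (ν + 1) * ((1 - 2 * z) * ₂F₁ (-ν) (ν + 1) 1 z - ₂F₁ (-(ν + 1)) (ν + 1 + 1) 1 z) := by
  set A := ordinaryHypergeometricCoefficient (-ν) (ν + 1) (1 : ℂ)
  set B := ordinaryHypergeometricCoefficient (-(ν + 1)) (ν + 1 + 1) (1 : ℂ)
  have hz' : z ∈ Metric.eball (0 : ℂ) 1 :=
    mem_eball_zero_iff.2 (by simpa [enorm_eq_nnnorm, ← NNReal.coe_lt_coe] using hz)
  have hF := (hasFPowerSeriesOnBall_ordinaryHypergeometric (-ν) (ν + 1) 1).hasSum_ofScalars hz'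
  have hG :=
    (hasFPowerSeriesOnBall_ordinaryHypergeometric (-(ν + 1)) (ν + 1 + 1) 1).hasSum_ofScalars hz'
  have hθF :=
    (hasFPowerSeriesOnBall_ordinaryHypergeometric (-ν) (ν + 1) 1).hasSum_ofScalars_mul_deriv hz'
  set F : ℂ → ℂ := ₂F₁ (-ν) (ν + 1) 1
  set G : ℂ → ℂ := ₂F₁ (-(ν + 1)) (ν + 1 + 1) 1
  -- The relation in the form `(ν+1)(G - F) - 2zF' = -z (2zF' + 2(ν+1)F)`: the coefficient of
  -- `z^(n+1)` on the left is tied to the coefficient of `z^n` on the right.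
  have hleft : HasSum (fun n ↦ ((ν + 1) * (B n - A n) - 2 * n * A n) * z ^ n)
      ((ν + 1) * (G z - F z) - 2 * (z * deriv F z)) :=
    (((hG.sub hF).mul_left (ν + 1)).sub (hθF.mul_left 2)).congr_fun fun n ↦ by ring
  have hright : HasSum (fun n ↦ 2 * (n + ν + 1) * A n * z ^ n)
      (2 * (z * deriv F z) + 2 * (ν + 1) * F z) :=
    ((hθF.mul_left 2).add (hF.mul_left (2 * (ν + 1)))).congr_fun fun n ↦ by ring
  have hleft_succ : HasSum
      (fun n ↦ ((ν + 1) * (B (n + 1) - A (n + 1)) - 2 * (n + 1 : ℕ) * A (n + 1)) * z ^ (n + 1))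
      ((ν + 1) * (G z - F z) - 2 * (z * deriv F z)) := by
    have h0 : B 0 - A 0 = 0 := by simp [A, B, ordinaryHypergeometricCoefficient]
    simpa [h0] using (hasSum_nat_add_iff' 1).mpr hleft
  have hshift : HasSum
      (fun n ↦ ((ν + 1) * (B (n + 1) - A (n + 1)) - 2 * (n + 1 : ℕ) * A (n + 1)) * z ^ (n + 1))
      (-z * (2 * (z * deriv F z) + 2 * (ν + 1) * F z)) := by
    refine (hright.mul_left (-z)).congr_fun fun n ↦ ?_
    push_cast
    rw [ordinaryHypergeometricCoefficient_legendre_succ]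
    ring
  linear_combination hleft_succ.unique hshift

theorem hasDerivAt_legendreP (ν : ℂ) {x : ℂ} (hx : ‖1 - x‖ < 2) :
    HasDerivAt (legendreP ν) (-deriv (₂F₁ (-ν) (ν + 1) 1) ((1 - x) / 2) / 2) x := by
  have hz : ‖(1 - x) / 2‖ < 1 := by rw [norm_div, RCLike.norm_ofNat]; linarith
  exact ((analyticAt_ordinaryHypergeometric (-ν) (ν + 1) 1 hz).differentiableAt.hasDerivAt.comp x
    (((hasDerivAt_id x).const_sub 1).div_const 2)).congr_deriv (by ring)

theorem one_sub_sq_mul_deriv_legendreP (ν : ℂ) {x : ℂ} (hx : ‖1 - x‖ < 2) :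
    (1 - x ^ 2) * deriv (legendreP ν) x = (ν + 1) * (x * legendreP ν x - legendreP (ν + 1) x) := by
  have hz : ‖(1 - x) / 2‖ < 1 := by rw [norm_div, RCLike.norm_ofNat]; linarith
  rw [(hasDerivAt_legendreP ν hx).deriv, legendreP, legendreP]
  linear_combination ordinaryHypergeometric_legendre_contiguous ν hz

theorem stmt14 (ν : ℂ) (x : ℝ) (h1 : -1 < x) (h2 : x < 1) :
    HasDerivAt (fun y : ℝ => ((1 - (y:ℂ) ^ 2) ^ (ν + 1)) * legendreP ν (y : ℂ) *
        legendreP ν (-(y : ℂ)))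
      ((ν + 1) * ((1 - (x:ℂ) ^ 2) ^ ν) *
        (legendreP ν (x : ℂ) * legendreP (ν + 1) (-(x : ℂ)) -
          legendreP ν (-(x : ℂ)) * legendreP (ν + 1) (x : ℂ))) x := by
  have hx₁ : ‖1 - (x : ℂ)‖ < 2 := by
    rw [← ofReal_one, ← ofReal_sub, norm_real, Real.norm_eq_abs, abs_lt]
    constructor <;> linarith
  have hx₂ : ‖1 - -(x : ℂ)‖ < 2 := by
    rw [← ofReal_one, ← ofReal_neg, ← ofReal_sub, norm_real, Real.norm_eq_abs, abs_lt]
    constructor <;> linarith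
  have hs : (1 - (x : ℂ) ^ 2) ∈ slitPlane := by
    rw [← ofReal_one, ← ofReal_pow, ← ofReal_sub, ofReal_mem_slitPlane]
    nlinarith
  have hP₁ := (hasDerivAt_legendreP ν hx₁).differentiableAt.hasDerivAt
  have hP₂ := (hasDerivAt_legendreP ν hx₂).differentiableAt.hasDerivAt.comp (x : ℂ)
    (hasDerivAt_neg (x : ℂ))
  have hW := ((hasDerivAt_pow 2 (x : ℂ)).const_sub 1).cpow_const (c := ν + 1) hs
  refine (((hW.mul hP₁).mul hP₂).comp_ofReal).congr_deriv ?_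
  simp only [Function.comp_apply, Pi.mul_apply]
  rw [add_sub_cancel_right, cpow_add _ _ (slitPlane_ne_zero hs), cpow_one]
  linear_combination (1 - (x : ℂ) ^ 2) ^ ν * legendreP ν (-x) *
      one_sub_sq_mul_deriv_legendreP ν hx₁ -
    (1 - (x : ℂ) ^ 2) ^ ν * legendreP ν x * one_sub_sq_mul_deriv_legendreP ν hx₂
end
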